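/- Let f : [-1/2,1/2] → ℝ be convex, set f_s(t) = (f(t)+f(−t))/2 − f(0), and let 0 < t* ≤ 1/2. Then there exists a convex function g on [-1/2,1/2] with g(0) − f(0) = f_s(t*) and ∫_{-1/2}^{1/2} (g(t) − f(t))² dt ≤ (9/4) f_s(t*)² t*. -/

import Mathlib

open MeasureTheory Set

/-!
Subtracting a supporting line `ℓ` of `f` at `0` leaves `G = f - ℓ ≥ 0` with `G 0 = 0`, and
`fs t* = height G t* =: c`. Take `g = f + bump G t* = max f (ℓ + L)`, where the line
`L t = c + tilt G t* * t` has half the slope of the chord of `G` over `[-t*, t*]`. Say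
`G (-t*) ≤ G t*` (otherwise reflect `t ↦ -t`). Convexity of `G` through `G 0 = 0` gives
`G t ≥ (|t| / t*) G (±t*)` for `|t| ≥ t*`, so the bump vanishes on `[t*, 1/2]` and is at most
`c (1 + t / (2t*))⁺` on `[-1/2, -t*]`, contributing at most `c² t* / 12`; on `[-t*, t*]` it is at
most `L`, and `∫ L² ≤ (2 + 1/6) c² t*` because `0 ≤ tilt G t* * t* ≤ c / 2`.
Finally `2 + 1/6 + 1/12 = 9/4`.
-/

theorem ConvexOn.exists_add_mul_sub_le {S : Set ℝ} {f : ℝ → ℝ} (hf : ConvexOn ℝ S f) {x : ℝ}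
    (hx : x ∈ interior S) : ∃ d, ∀ y ∈ S, f x + d * (y - x) ≤ f y := by
  refine ⟨derivWithin f (Ioi x) x, fun y hy => ?_⟩
  rcases lt_trichotomy y x with hyx | rfl | hxy
  · have h := (hf.slope_le_leftDeriv_of_mem_interior hy hx hyx).trans
      (hf.leftDeriv_le_rightDeriv_of_mem_interior hx)
    rw [slope_def_field, div_le_iff₀ (sub_pos.2 hyx)] at h
    linarith
  · simp
  · have h := hf.rightDeriv_le_slope_of_mem_interior hx hy hxy
    rw [slope_def_field, le_div_iff₀ (sub_pos.2 hxy)] at h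
    linarith

theorem ConvexOn.comp_neg_Icc {f : ℝ → ℝ} {a b : ℝ} (hf : ConvexOn ℝ (Icc a b) f) :
    ConvexOn ℝ (Icc (-b) (-a)) fun t => f (-t) := by
  refine ⟨convex_Icc _ _, fun x hx y hy μ ν hμ hν hμν => ?_⟩
  have h := hf.2 (x := -x) (y := -y) ⟨by linarith [hx.2], by linarith [hx.1]⟩
    ⟨by linarith [hy.2], by linarith [hy.1]⟩ hμ hν hμν
  simpa only [smul_eq_mul, mul_neg, neg_add] using h

theorem ConvexOn.map_smul_le_of_map_zero {E : Type*} [AddCommGroup E] [Module ℝ E] {S : Set E}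
    {G : E → ℝ} (hG : ConvexOn ℝ S G) (h0 : 0 ∈ S) (hG0 : G 0 = 0) {x : E} (hx : x ∈ S) {μ : ℝ}
    (hμ0 : 0 ≤ μ) (hμ1 : μ ≤ 1) : G (μ • x) ≤ μ * G x := by
  simpa [hG0] using hG.2 hx h0 hμ0 (sub_nonneg.2 hμ1) (add_sub_cancel μ 1)

theorem hasDerivAt_max_zero_pow_three (x : ℝ) :
    HasDerivAt (fun y : ℝ => max y 0 ^ 3) (3 * max x 0 ^ 2) x := by
  have key : ∀ y : ℝ, max y 0 ^ 3 = (y ^ 3 + |y| ^ (3:ℝ)) / 2 := by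
    intro y
    rw [show (3:ℝ) = ((3:ℕ):ℝ) by norm_num, Real.rpow_natCast]
    rcases le_total y 0 with hy | hy
    · rw [max_eq_right hy, abs_of_nonpos hy]; ring
    · rw [max_eq_left hy, abs_of_nonneg hy]; ring
  rw [show (fun y : ℝ => max y 0 ^ 3) = _ from funext key]
  have h := ((hasDerivAt_pow 3 x).add (hasDerivAt_abs_rpow x (p := 3) (by norm_num))).div_const 2
  refine h.congr_deriv ?_
  norm_num
  rcases le_total x 0 with hx | hx
  · rw [max_eq_right hx, abs_of_nonpos hx]; ring
  · rw [max_eq_left hx, abs_of_nonneg hx]; ring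

theorem integral_max_zero_sq (a b : ℝ) :
    ∫ t in a..b, max t 0 ^ 2 = (max b 0 ^ 3 - max a 0 ^ 3) / 3 := by
  have hderiv : ∀ x ∈ uIcc a b, HasDerivAt (fun y => max y 0 ^ 3 / 3) (max x 0 ^ 2) x :=
    fun x _ => by simpa using (hasDerivAt_max_zero_pow_three x).div_const 3
  rw [intervalIntegral.integral_eq_sub_of_hasDerivAt hderiv
    (Continuous.intervalIntegrable (by fun_prop) _ _)]
  ring

theorem integral_max_div_add_one_sq_le {a s : ℝ} (hs : 0 < s) :
    ∫ t in a..-s, max (t / (2 * s) + 1) 0 ^ 2 ≤ s / 12 := by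
  rw [intervalIntegral.integral_comp_div_add (fun y => max y 0 ^ 2) (by positivity),
    integral_max_zero_sq]
  have h : -s / (2 * s) + 1 = 1 / 2 := by field_simp; ring
  rw [h, smul_eq_mul]
  have : 0 ≤ max (a / (2 * s) + 1) 0 ^ 3 := by positivity
  norm_num
  nlinarith

theorem integral_add_mul_sq (c m s : ℝ) :
    ∫ t in (-s)..s, (c + m * t) ^ 2 = 2 * c ^ 2 * s + 2 / 3 * m ^ 2 * s ^ 3 := by
  have : ∀ t : ℝ, (c + m * t) ^ 2 = c ^ 2 + (2 * c * m) * t + m ^ 2 * t ^ 2 := fun t => by ring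
  simp_rw [this]
  rw [intervalIntegral.integral_add, intervalIntegral.integral_add,
    intervalIntegral.integral_const_mul, intervalIntegral.integral_const_mul]
  · simp [integral_pow]; ring
  all_goals exact Continuous.intervalIntegrable (by fun_prop) _ _

namespace ConvexPerturbation

noncomputable def height (G : ℝ → ℝ) (s : ℝ) : ℝ := (G s + G (-s)) / 2

noncomputable def tilt (G : ℝ → ℝ) (s : ℝ) : ℝ := (G s - G (-s)) / (4 * s)

noncomputable def bump (G : ℝ → ℝ) (s t : ℝ) : ℝ := max (height G s + tilt G s * t - G t) 0

variable {G : ℝ → ℝ} {S : Set ℝ} {s t : ℝ}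

theorem height_comp_neg : height (fun t => G (-t)) s = height G s := by
  simp only [height, neg_neg, add_comm]

theorem bump_comp_neg : bump (fun t => G (-t)) s t = bump G s (-t) := by
  simp only [bump, height_comp_neg, tilt, neg_neg]
  ring_nf

theorem height_nonneg (hp : 0 ≤ G s) (hq : 0 ≤ G (-s)) : 0 ≤ height G s :=
  div_nonneg (add_nonneg hp hq) zero_le_two

theorem bump_zero (hG0 : G 0 = 0) (hc : 0 ≤ height G s) : bump G s 0 = height G s := by
  rw [bump, mul_zero, add_zero, hG0, sub_zero, max_eq_left hc]

theorem bump_nonneg : 0 ≤ bump G s t := le_max_right _ _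

theorem bump_le_max (hGt : 0 ≤ G t) : bump G s t ≤ max (height G s + tilt G s * t) 0 :=
  max_le_max (by linarith) le_rfl

theorem bump_eq_zero_of_le (hG : ConvexOn ℝ S G) (h0 : 0 ∈ S) (hG0 : G 0 = 0) (ht : t ∈ S)
    (hs : 0 < s) (hst : s ≤ t) (hq : 0 ≤ G (-s)) (hsym : G (-s) ≤ G s) : bump G s t = 0 := by
  have htpos : 0 < t := hs.trans_le hst
  have hconv : G s * t ≤ s * G t := by
    have h := hG.map_smul_le_of_map_zero h0 hG0 ht (μ := s / t) (by positivity)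
      ((div_le_one htpos).2 hst)
    rw [smul_eq_mul, div_mul_cancel₀ _ htpos.ne', div_mul_eq_mul_div, le_div_iff₀ htpos] at h
    exact h
  have htilt : tilt G s * (4 * s) = G s - G (-s) := by unfold tilt; field_simp
  refine max_eq_right ?_
  unfold height
  nlinarith [mul_le_mul_of_nonneg_left hst (by linarith : 0 ≤ 3 * G s + G (-s))]

theorem bump_le_of_le_neg (hG : ConvexOn ℝ S G) (h0 : 0 ∈ S) (hG0 : G 0 = 0) (ht : t ∈ S)
    (hs : 0 < s) (hts : t ≤ -s) (hq : 0 ≤ G (-s)) (hsym : G (-s) ≤ G s) :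
    bump G s t ≤ height G s * max (t / (2 * s) + 1) 0 := by
  have hnegt : 0 < -t := by linarith
  have hconv : G (-s) * -t ≤ s * G t := by
    have h := hG.map_smul_le_of_map_zero h0 hG0 ht (μ := s / -t) (by positivity)
      ((div_le_one hnegt).2 (by linarith))
    have hμ : s / -t * t = -s := by field_simp [(neg_pos.1 hnegt).ne]
    rw [smul_eq_mul, hμ, div_mul_eq_mul_div, le_div_iff₀ hnegt] at h
    exact h
  have hline : (height G s + tilt G s * t - G t) * (4 * s) ≤
      height G s * (t / (2 * s) + 1) * (4 * s) := by
    have htilt : tilt G s * (4 * s) = G s - G (-s) := by unfold tilt; field_simp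
    have hheight : height G s * (t / (2 * s) + 1) * (4 * s) = (G s + G (-s)) * (t + 2 * s) := by
      unfold height; field_simp; ring
    rw [hheight]
    unfold height
    nlinarith [mul_nonneg hq hnegt.le]
  rw [mul_max_of_nonneg _ _ (by unfold height; linarith), mul_zero]
  exact max_le_max (le_of_mul_le_mul_right hline (by positivity)) le_rfl

theorem intervalIntegrable_bump_sq {x y : ℝ} (hG : ConvexOn ℝ S G) (hGnn : ∀ t ∈ S, 0 ≤ G t)
    (hxy : x ≤ y) (hS : Icc x y ⊆ S) :
    IntervalIntegrable (fun t => bump G s t ^ 2) volume x y := by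
  have hGcont : ContinuousOn G (Ioo x y) :=
    hG.continuousOn_interior.mono (by simpa only [interior_Icc] using interior_mono hS)
  have hcont : ContinuousOn (fun t => bump G s t ^ 2) (Ioo x y) := by
    unfold bump; fun_prop
  rw [intervalIntegrable_iff_integrableOn_Ioo_of_le hxy]
  refine Integrable.mono' (g := fun t => max (height G s + tilt G s * t) 0 ^ 2)
    ((Continuous.integrableOn_Icc (by fun_prop)).mono_set Ioo_subset_Icc_self)
    (hcont.aestronglyMeasurable measurableSet_Ioo)
    ((ae_restrict_iff' measurableSet_Ioo).2 (Filter.Eventually.of_forall fun t ht => ?_))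
  rw [Real.norm_eq_abs, abs_of_nonneg (by positivity)]
  exact pow_le_pow_left₀ bump_nonneg (bump_le_max (hGnn t (hS (Ioo_subset_Icc_self ht)))) 2

theorem integral_bump_sq_left_le {a : ℝ} (hG : ConvexOn ℝ S G) (h0 : 0 ∈ S) (hG0 : G 0 = 0)
    (hGnn : ∀ t ∈ S, 0 ≤ G t) (hs : 0 < s) (ha : a ≤ -s) (hS : Icc a (-s) ⊆ S)
    (hsym : G (-s) ≤ G s) :
    ∫ t in a..-s, bump G s t ^ 2 ≤ height G s ^ 2 * (s / 12) := by
  have hq : 0 ≤ G (-s) := hGnn _ (hS ⟨ha, le_rfl⟩)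
  calc ∫ t in a..-s, bump G s t ^ 2
      ≤ ∫ t in a..-s, height G s ^ 2 * max (t / (2 * s) + 1) 0 ^ 2 := by
        refine intervalIntegral.integral_mono_on ha (intervalIntegrable_bump_sq hG hGnn ha hS)
          (Continuous.intervalIntegrable (by fun_prop) _ _) fun t ht => ?_
        rw [← mul_pow]
        exact pow_le_pow_left₀ bump_nonneg (bump_le_of_le_neg hG h0 hG0 (hS ht) hs ht.2 hq hsym) 2
    _ ≤ height G s ^ 2 * (s / 12) := by
        rw [intervalIntegral.integral_const_mul]
        exact mul_le_mul_of_nonneg_left (integral_max_div_add_one_sq_le hs) (sq_nonneg _)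

theorem integral_bump_sq_center_le (hG : ConvexOn ℝ S G) (hGnn : ∀ t ∈ S, 0 ≤ G t) (hs : 0 < s)
    (hS : Icc (-s) s ⊆ S) (hsym : G (-s) ≤ G s) :
    ∫ t in -s..s, bump G s t ^ 2 ≤ height G s ^ 2 * (2 * s + s / 6) := by
  have hq : 0 ≤ G (-s) := hGnn _ (hS ⟨le_rfl, by linarith⟩)
  have hm : 0 ≤ tilt G s := by unfold tilt; exact div_nonneg (by linarith) (by positivity)
  have hms : tilt G s * s ≤ height G s / 2 := by
    unfold tilt height; rw [div_mul_eq_mul_div, div_le_iff₀ (by positivity)]; nlinarith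
  calc ∫ t in -s..s, bump G s t ^ 2
      ≤ ∫ t in -s..s, (height G s + tilt G s * t) ^ 2 := by
        refine intervalIntegral.integral_mono_on (by linarith)
          (intervalIntegrable_bump_sq hG hGnn (by linarith) hS)
          (Continuous.intervalIntegrable (by fun_prop) _ _) fun t ht => ?_
        have hline : 0 ≤ height G s + tilt G s * t := by nlinarith [ht.1]
        exact pow_le_pow_left₀ bump_nonneg
          ((bump_le_max (hGnn t (hS ht))).trans_eq (max_eq_left hline)) 2
    _ = 2 * height G s ^ 2 * s + 2 / 3 * tilt G s ^ 2 * s ^ 3 := integral_add_mul_sq _ _ _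
    _ ≤ height G s ^ 2 * (2 * s + s / 6) := by
        nlinarith [mul_le_mul_of_nonneg_right (pow_le_pow_left₀ (mul_nonneg hm hs.le) hms 2) hs.le]

theorem integral_bump_sq_right_eq_zero {b : ℝ} (hG : ConvexOn ℝ S G) (h0 : 0 ∈ S)
    (hG0 : G 0 = 0) (hs : 0 < s) (hb : s ≤ b) (hS : Icc s b ⊆ S) (hq : 0 ≤ G (-s))
    (hsym : G (-s) ≤ G s) :
    ∫ t in s..b, bump G s t ^ 2 = 0 := by
  rw [← intervalIntegral.integral_zero]
  refine intervalIntegral.integral_congr fun t ht => ?_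
  rw [uIcc_of_le hb] at ht
  simp [bump_eq_zero_of_le hG h0 hG0 (hS ht) hs ht.1 hq hsym]

theorem integral_bump_sq_le_of_le {a b : ℝ} (hG : ConvexOn ℝ (Icc a b) G) (hG0 : G 0 = 0)
    (hGnn : ∀ t ∈ Icc a b, 0 ≤ G t) (hs : 0 < s) (ha : a ≤ -s) (hb : s ≤ b)
    (hsym : G (-s) ≤ G s) :
    ∫ t in a..b, bump G s t ^ 2 ≤ 9 / 4 * height G s ^ 2 * s := by
  have h0 : (0 : ℝ) ∈ Icc a b := ⟨by linarith, by linarith⟩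
  have hsub : ∀ {x y}, a ≤ x → y ≤ b → Icc x y ⊆ Icc a b := Icc_subset_Icc
  have hint : ∀ {x y}, a ≤ x → x ≤ y → y ≤ b →
      IntervalIntegrable (fun t => bump G s t ^ 2) volume x y := fun hax hxy hyb =>
    intervalIntegrable_bump_sq hG hGnn hxy (hsub hax hyb)
  have hleft := integral_bump_sq_left_le hG h0 hG0 hGnn hs ha (hsub le_rfl (by linarith)) hsym
  have hcenter := integral_bump_sq_center_le hG hGnn hs (hsub ha hb) hsym
  have hright := integral_bump_sq_right_eq_zero hG h0 hG0 hs hb (hsub (by linarith) le_rfl)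
    (hGnn _ ⟨ha, by linarith⟩) hsym
  rw [← intervalIntegral.integral_add_adjacent_intervals (hint le_rfl ha (by linarith))
    (hint ha (by linarith) le_rfl), ← intervalIntegral.integral_add_adjacent_intervals
    (hint ha (by linarith) hb) (hint (by linarith) hb le_rfl), hright]
  linarith

theorem integral_bump_sq_le {a b : ℝ} (hG : ConvexOn ℝ (Icc a b) G) (hG0 : G 0 = 0)
    (hGnn : ∀ t ∈ Icc a b, 0 ≤ G t) (hs : 0 < s) (ha : a ≤ -s) (hb : s ≤ b) :
    ∫ t in a..b, bump G s t ^ 2 ≤ 9 / 4 * height G s ^ 2 * s := by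
  rcases le_total (G (-s)) (G s) with hsym | hsym
  · exact integral_bump_sq_le_of_le hG hG0 hGnn hs ha hb hsym
  · have h := integral_bump_sq_le_of_le (G := fun t => G (-t)) hG.comp_neg_Icc (by simpa)
      (fun t ht => hGnn (-t) ⟨by linarith [ht.2], by linarith [ht.1]⟩) hs (neg_le_neg hb)
      (le_neg.1 ha) (by simpa using hsym)
    simp only [bump_comp_neg, height_comp_neg] at h
    rwa [intervalIntegral.integral_comp_neg (fun t => bump G s t ^ 2), neg_neg, neg_neg] at h

theorem _root_.ConvexOn.add_bump {f : ℝ → ℝ} (hf : ConvexOn ℝ S f) (d s : ℝ) :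
    ConvexOn ℝ S fun t => f t + bump (fun t => f t - (f 0 + d * t)) s t := by
  set G : ℝ → ℝ := fun t => f t - (f 0 + d * t)
  have hmax : (fun t => f t + bump G s t) =
      f ⊔ fun t => f 0 + height G s + (d + tilt G s) * t := by
    funext t
    rw [Pi.sup_apply, bump, ← max_add_add_left, add_zero, max_comm]
    congr 1
    simp only [G]
    ring
  rw [hmax]
  refine hf.sup ⟨hf.1, fun x _ y _ μ ν _ _ hμν => le_of_eq ?_⟩
  simp only [smul_eq_mul]
  linear_combination (f 0 + height G s) * hμν.symm

end ConvexPerturbation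

open ConvexPerturbation in
theorem convex_perturbation
    (f : ℝ → ℝ) (hf : ConvexOn ℝ (Set.Icc (-(1:ℝ)/2) (1/2)) f)
    (fs : ℝ → ℝ) (hfs : ∀ t : ℝ, fs t = (f t + f (-t))/2 - f 0)
    (tstar : ℝ) (ht0 : 0 < tstar) (ht1 : tstar ≤ 1/2) :
    ∃ g : ℝ → ℝ, ConvexOn ℝ (Set.Icc (-(1:ℝ)/2) (1/2)) g ∧
      g 0 - f 0 = fs tstar ∧
      (∫ t in (-(1:ℝ)/2)..(1/2), (g t - f t)^2) ≤ (9/4) * (fs tstar)^2 * tstar := by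
  obtain ⟨d, hd⟩ := hf.exists_add_mul_sub_le (x := 0) (by rw [interior_Icc]; norm_num)
  set G : ℝ → ℝ := fun t => f t - (f 0 + d * t)
  have hG : ConvexOn ℝ (Icc (-(1:ℝ)/2) (1/2)) G :=
    hf.sub ((concaveOn_const _ hf.1).add ((LinearMap.mulLeft ℝ d).concaveOn hf.1))
  have hGnn : ∀ t ∈ Icc (-(1:ℝ)/2) (1/2), 0 ≤ G t := fun t ht => by
    simpa [G] using hd t ht
  have hG0 : G 0 = 0 := by simp [G]
  have hheight : height G tstar = fs tstar := by simp only [height, G, hfs]; ring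
  refine ⟨fun t => f t + bump G tstar t, hf.add_bump d tstar, ?_, ?_⟩
  · rw [add_sub_cancel_left, bump_zero hG0, hheight]
    exact height_nonneg (hGnn _ ⟨by linarith, ht1⟩) (hGnn _ ⟨by linarith, by linarith⟩)
  · simpa [hheight] using integral_bump_sq_le hG hG0 hGnn ht0 (by linarith) ht1
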